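/- (Theorem 1, closed-loop identity.) Let J be a symmetric positive-definite 3×3 real matrix, λ > 0, K = (k₁,k₂,k₃) with kᵢ > 0, and let ω, ω_d, f, d : ℝ → ℝ³ with ω, ω_d differentiable. Let q_e : ℝ → Quaternion ℝ be differentiable with ‖q_e(t)‖ = 1 and q_e'(t) = (1/2) · q_e(t) * ⟦ω(t) − ω_d(t)⟧. Define the sliding variable s(t) = ω(t) − ω_d(t) + λ · sgn₊(q_e°(t)) · q⃗_e(t). Fix t with q_e°(t) ≠ 0, and suppose the rigid-body dynamics J ω'(t) = −ω(t) × (J ω(t)) + f(t) + M_b(t) + d(t) hold with the feedback-plus-feedforward control law M_b(t) = J ω_d'(t) + ω(t) × (J ω(t)) − f(t) − λ · sgn₊(q_e°(t)) · J · (q⃗_e)'(t) − K∘s(t). Then s is differentiable at t with J s'(t) = d(t) − K∘s(t), and consequently d/dt (s(t)ᵀ J s(t)) = −2 Σᵢ (kᵢ sᵢ(t)² − sᵢ(t) dᵢ(t)). -/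

import Mathlib

/-! The control law is built so that, in `J ṡ`, its feedforward part cancels the gyroscopic
term, `f` and the derivatives of `ω_d` and `λ sgn₊(q_e°) q⃗_e`, leaving
`J ṡ = d − K∘s`; near a point where `q_e° ≠ 0` the sign `sgn₊(q_e°)` is locally constant, so `s`
is differentiable there. Symmetry of `J` then gives `(sᵀ J s)' = 2 sᵀ J ṡ = 2 sᵀ (d − K∘s)`. -/

noncomputable section

open Matrix

/-- `sgn₊ x = 1` if `x ≥ 0` and `-1` if `x < 0`. -/
def sgnPlus (x : ℝ) : ℝ := if 0 ≤ x then 1 else -1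

/-- The vector (imaginary) part of a quaternion. -/
def vecPart (p : Quaternion ℝ) : Fin 3 → ℝ := ![p.imI, p.imJ, p.imK]

/-- The pure-imaginary quaternion `⟦v⟧` with vector part `v`. -/
def quatOfVec (v : Fin 3 → ℝ) : Quaternion ℝ := ⟨0, v 0, v 1, v 2⟩

/-- Componentwise product `K∘v = (k₁v₁, k₂v₂, k₃v₃)`. -/
def compMul (K v : Fin 3 → ℝ) : Fin 3 → ℝ := fun i => K i * v i

open Topology

theorem sgnPlus_eventually_eq {X : Type*} [TopologicalSpace X] {g : X → ℝ} {x : X}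
    (hg : ContinuousAt g x) (hx : g x ≠ 0) : ∀ᶠ y in 𝓝 x, sgnPlus (g y) = sgnPlus (g x) := by
  rcases hx.lt_or_gt with hneg | hpos
  · filter_upwards [hg.eventually (eventually_lt_nhds hneg)] with y hy
    simp [sgnPlus, not_le.2 hy, not_le.2 hneg]
  · filter_upwards [hg.eventually (eventually_gt_nhds hpos)] with y hy
    simp [sgnPlus, hy.le, hpos.le]

theorem HasDerivAt.vecPart {q : ℝ → Quaternion ℝ} {q' : Quaternion ℝ} {t : ℝ}
    (hq : HasDerivAt q q' t) : HasDerivAt (fun τ => vecPart (q τ)) (vecPart q') t := by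
  refine hasDerivAt_pi.2 fun i => ?_
  fin_cases i
  · exact (QuaternionAlgebra.imIₗ _ _ _).toContinuousLinearMap.hasFDerivAt.comp_hasDerivAt t hq
  · exact (QuaternionAlgebra.imJₗ _ _ _).toContinuousLinearMap.hasFDerivAt.comp_hasDerivAt t hq
  · exact (QuaternionAlgebra.imKₗ _ _ _).toContinuousLinearMap.hasFDerivAt.comp_hasDerivAt t hq

section

variable {n : Type*} [Fintype n] {a b s : ℝ → n → ℝ} {a' b' v : n → ℝ} {t : ℝ}

theorem HasDerivAt.dotProduct (ha : HasDerivAt a a' t) (hb : HasDerivAt b b' t) :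
    HasDerivAt (fun τ => a τ ⬝ᵥ b τ) (a' ⬝ᵥ b t + a t ⬝ᵥ b') t := by
  unfold _root_.dotProduct
  rw [← Finset.sum_add_distrib]
  exact HasDerivAt.fun_sum fun i _ => (hasDerivAt_pi.1 ha i).mul (hasDerivAt_pi.1 hb i)

theorem HasDerivAt.mulVec (A : Matrix n n ℝ) (ha : HasDerivAt a a' t) :
    HasDerivAt (fun τ => A *ᵥ a τ) (A *ᵥ a') t :=
  (Matrix.mulVecLin A).toContinuousLinearMap.hasFDerivAt.comp_hasDerivAt t ha

theorem HasDerivAt.dotProduct_mulVec_self {J : Matrix n n ℝ} (hJ : J.IsSymm)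
    (hs : HasDerivAt s v t) :
    HasDerivAt (fun τ => s τ ⬝ᵥ (J *ᵥ s τ)) (2 * (s t ⬝ᵥ (J *ᵥ v))) t := by
  convert hs.dotProduct (hs.mulVec J) using 1
  rw [Matrix.dotProduct_mulVec, ← Matrix.mulVec_transpose, hJ, dotProduct_comm]
  ring

end

theorem dotProduct_sub_compMul (K s d : Fin 3 → ℝ) :
    s ⬝ᵥ (d - compMul K s) = -∑ i, (K i * s i ^ 2 - s i * d i) := by
  simp only [dotProduct, compMul, Pi.sub_apply, ← Finset.sum_neg_distrib]
  exact Finset.sum_congr rfl fun i _ => by ring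

theorem nonlinear_PD_closed_loop_identity_general
    (J : Matrix (Fin 3) (Fin 3) ℝ) (hJsymm : J.IsSymm)
    (lam : ℝ)
    (K : Fin 3 → ℝ)
    (ω ωd f d : ℝ → Fin 3 → ℝ)
    (hω : Differentiable ℝ ω) (hωd : Differentiable ℝ ωd)
    (qe : ℝ → Quaternion ℝ) (hqe : Differentiable ℝ qe)
    (s : ℝ → Fin 3 → ℝ)
    (hs : ∀ τ : ℝ, s τ = ω τ - ωd τ + (lam * sgnPlus (qe τ).re) • vecPart (qe τ))
    (t : ℝ) (hre : (qe t).re ≠ 0)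
    (Mb : Fin 3 → ℝ)
    (hMb : Mb = J *ᵥ deriv ωd t + ω t ⨯₃ (J *ᵥ ω t) - f t -
      (lam * sgnPlus (qe t).re) • (J *ᵥ deriv (fun τ => vecPart (qe τ)) t) -
      compMul K (s t))
    (hdynamics : J *ᵥ deriv ω t = -(ω t ⨯₃ (J *ᵥ ω t)) + f t + Mb + d t) :
    (∃ v : Fin 3 → ℝ, HasDerivAt s v t ∧ J *ᵥ v = d t - compMul K (s t)) ∧
      HasDerivAt (fun τ => s τ ⬝ᵥ (J *ᵥ s τ))
        (-2 * ∑ i, (K i * (s t i) ^ 2 - s t i * d t i)) t := by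
  have hvec : HasDerivAt (fun τ => vecPart (qe τ)) (deriv (fun τ => vecPart (qe τ)) t) t :=
    (hqe t).hasDerivAt.vecPart.differentiableAt.hasDerivAt
  have hsign : ∀ᶠ τ in 𝓝 t, sgnPlus (qe τ).re = sgnPlus (qe t).re :=
    sgnPlus_eventually_eq (Quaternion.continuous_re.comp hqe.continuous).continuousAt hre
  set v := deriv ω t - deriv ωd t + (lam * sgnPlus (qe t).re) • deriv (fun τ => vecPart (qe τ)) t
  have hsd : HasDerivAt s v t :=
    (((hω t).hasDerivAt.sub (hωd t).hasDerivAt).add (hvec.const_smul _)).congr_of_eventuallyEq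
      (hsign.mono fun τ hτ => by rw [hs τ, hτ]; rfl)
  have hclosed : J *ᵥ v = d t - compMul K (s t) := by
    rw [Matrix.mulVec_add, Matrix.mulVec_sub, Matrix.mulVec_smul, hdynamics, hMb]
    abel
  refine ⟨⟨v, hsd, hclosed⟩, ?_⟩
  convert hsd.dotProduct_mulVec_self hJsymm using 1
  rw [hclosed, dotProduct_sub_compMul]
  ring

theorem nonlinear_PD_closed_loop_identity
    (J : Matrix (Fin 3) (Fin 3) ℝ) (hJsymm : J.IsSymm) (hJpos : J.PosDef)
    (lam : ℝ) (hlam : 0 < lam)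
    (K : Fin 3 → ℝ) (hK : ∀ i, 0 < K i)
    (ω ωd f d : ℝ → Fin 3 → ℝ)
    (hω : Differentiable ℝ ω) (hωd : Differentiable ℝ ωd)
    (qe : ℝ → Quaternion ℝ) (hqe : Differentiable ℝ qe)
    (hunit : ∀ τ : ℝ, ‖qe τ‖ = 1)
    (hkin : ∀ τ : ℝ, deriv qe τ = (1 / 2 : ℝ) • (qe τ * quatOfVec (ω τ - ωd τ)))
    (s : ℝ → Fin 3 → ℝ)
    (hs : ∀ τ : ℝ, s τ = ω τ - ωd τ + (lam * sgnPlus (qe τ).re) • vecPart (qe τ))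
    (t : ℝ) (hre : (qe t).re ≠ 0)
    (Mb : Fin 3 → ℝ)
    (hMb : Mb = J *ᵥ deriv ωd t + ω t ⨯₃ (J *ᵥ ω t) - f t -
      (lam * sgnPlus (qe t).re) • (J *ᵥ deriv (fun τ => vecPart (qe τ)) t) -
      compMul K (s t))
    (hdynamics : J *ᵥ deriv ω t = -(ω t ⨯₃ (J *ᵥ ω t)) + f t + Mb + d t) :
    (∃ v : Fin 3 → ℝ, HasDerivAt s v t ∧ J *ᵥ v = d t - compMul K (s t)) ∧
      HasDerivAt (fun τ => s τ ⬝ᵥ (J *ᵥ s τ))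
        (-2 * ∑ i, (K i * (s t i) ^ 2 - s t i * d t i)) t :=
  nonlinear_PD_closed_loop_identity_general J hJsymm lam K ω ωd f d hω hωd qe hqe s hs t hre Mb hMb
    hdynamics
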